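/- arXiv:2405.16900 — 3 statements merged into one kernel-verified Lean document; each statement's English description precedes it below -/
import Mathlib

section
/- Let X ∈ St(n,r) and v ∈ T_X with ‖v‖_F ≤ 1, where T_X := {u ∈ ℝ^{n×r} : Xᵀu + uᵀX = 0} is the tangent space. Then the polar retraction satisfies ‖(X+v)(I_r + vᵀv)^{-1/2} − (X+v)‖_F ≤ ‖v‖_F². -/
open Matrix
open scoped BigOperators

attribute [local instance] Matrix.frobeniusNormedAddCommGroup Matrix.frobeniusNormedSpace

noncomputable section

/-- the Frobenius norm of a real matrix -/
def frob {n r : ℕ} (A : Matrix (Fin n) (Fin r) ℝ) : ℝ :=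
  Real.sqrt (∑ i, ∑ j, (A i j) ^ 2)

/-- the Stiefel manifold St(n,r) -/
def Stiefel (n r : ℕ) : Set (Matrix (Fin n) (Fin r) ℝ) := {X | Xᵀ * X = 1}

/-- the tangent space of St(n,r) at X -/
def Tang {n r : ℕ} (X : Matrix (Fin n) (Fin r) ℝ) : Set (Matrix (Fin n) (Fin r) ℝ) :=
  {u | Xᵀ * u + uᵀ * X = 0}

lemma psd_one_add_sq {n r : ℕ} (v : Matrix (Fin n) (Fin r) ℝ) :
    (1 + vᵀ * v).PosSemidef := by
  have h := (Matrix.PosDef.one (n := Fin r) (R := ℝ)).posSemidef.add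
    (Matrix.posSemidef_conjTranspose_mul_self v)
  simpa using h

/-- `Matrix.PosSemidef.sqrt` as defined in Mathlib of December 2024 (since removed) -/
def Matrix.PosSemidef.sqrt {m : Type*} [Fintype m] [DecidableEq m] {A : Matrix m m ℝ}
    (hA : A.PosSemidef) : Matrix m m ℝ :=
  hA.1.eigenvectorUnitary.1 * diagonal ((↑) ∘ Real.sqrt ∘ hA.1.eigenvalues) *
    (star hA.1.eigenvectorUnitary : Matrix m m ℝ)

/-- the polar retraction R_X(v) = (X+v)(I + vᵀv)^{-1/2} -/
def polarRetract {n r : ℕ} (X v : Matrix (Fin n) (Fin r) ℝ) : Matrix (Fin n) (Fin r) ℝ :=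
  (X + v) * ((psd_one_add_sq v).sqrt)⁻¹

/-! With `A := vᵀ v`, tangency gives `(X + v)ᵀ (X + v) = 1 + A`, and the error
`D := R_X(v) - (X + v)` equals `(X + v) g(A)` with `g x = (1 + x)^{-1/2} - 1`. Hence
`Dᵀ D = (√(1 + A) - 1)²` by functional calculus in `A`, and over the eigenvalues `λᵢ ≥ 0` of `A`,
`‖D‖² = ∑ (√(1 + λᵢ) - 1)² ≤ ∑ λᵢ² ≤ (∑ λᵢ)² = ‖v‖⁴`, since `√(1 + λ) - 1 ≤ λ`. -/

lemma frob_sq_eq_trace {n r : ℕ} (M : Matrix (Fin n) (Fin r) ℝ) :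
    frob M ^ 2 = (Mᵀ * M).trace := by
  rw [frob, Real.sq_sqrt (by positivity), trace, Finset.sum_comm]
  simp [mul_apply, sq]

namespace Matrix

theorem posSemidef_transpose_mul_self {k m : Type*} [Fintype k] [Fintype m]
    (v : Matrix k m ℝ) : (vᵀ * v).PosSemidef := by
  simpa using posSemidef_conjTranspose_mul_self v

variable {m : Type*} [Fintype m] [DecidableEq m]

theorem IsHermitian.trace_cfc {𝕜 : Type*} [RCLike 𝕜] {A : Matrix m m 𝕜} (hA : A.IsHermitian)
    (f : ℝ → ℝ) : (cfc f A).trace = ∑ i, (f (hA.eigenvalues i) : 𝕜) := by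
  rw [hA.cfc_eq, IsHermitian.cfc, Unitary.conjStarAlgAut_apply, trace_mul_cycle,
    Unitary.coe_star_mul_self, one_mul, trace_diagonal]
  rfl

theorem continuousOn_real_spectrum {𝕜 : Type*} [RCLike 𝕜] (A : Matrix m m 𝕜) (f : ℝ → ℝ) :
    ContinuousOn f (spectrum ℝ A) :=
  A.finite_real_spectrum.continuousOn f

variable {A : Matrix m m ℝ}

theorem PosSemidef.nonneg_of_mem_spectrum (hA : A.PosSemidef) {x : ℝ}
    (hx : x ∈ spectrum ℝ A) : 0 ≤ x := by
  obtain ⟨i, rfl⟩ := hA.isHermitian.spectrum_real_eq_range_eigenvalues ▸ hx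
  exact hA.eigenvalues_nonneg i

theorem PosSemidef.sqrt_eq_cfc (hA : A.PosSemidef) : hA.sqrt = cfc Real.sqrt A := by
  rw [hA.isHermitian.cfc_eq, IsHermitian.cfc, Unitary.conjStarAlgAut_apply]
  rfl

theorem transpose_cfc (f : ℝ → ℝ) : (cfc f A)ᵀ = cfc f A := by
  rw [← conjTranspose_eq_transpose_of_trivial, ← star_eq_conjTranspose,
    (cfc_predicate f A).star_eq]

theorem IsHermitian.cfc_one_add (hA : A.IsHermitian) : cfc (fun x : ℝ => 1 + x) A = 1 + A := by
  rw [cfc_const_add (1 : ℝ) _ A (ha := hA.isSelfAdjoint), cfc_id' ℝ A hA.isSelfAdjoint,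
    Algebra.algebraMap_eq_smul_one, one_smul]

end Matrix

theorem sqrt_one_add_sub_one_sq_le {x : ℝ} (hx : 0 ≤ x) : (√(1 + x) - 1) ^ 2 ≤ x ^ 2 := by
  have h1 : 1 ≤ √(1 + x) := Real.one_le_sqrt.mpr (by linarith)
  have h2 : √(1 + x) ^ 2 = 1 + x := Real.sq_sqrt (by linarith)
  have h3 : √(1 + x) - 1 ≤ x := by nlinarith
  exact pow_le_pow_left₀ (by linarith) h3 2

theorem transpose_mul_self_add_of_mem_Tang {n r : ℕ} {X v : Matrix (Fin n) (Fin r) ℝ}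
    (hX : X ∈ Stiefel n r) (hv : v ∈ Tang X) : (X + v)ᵀ * (X + v) = 1 + vᵀ * v := by
  have hX : Xᵀ * X = 1 := hX
  have hv : Xᵀ * v + vᵀ * X = 0 := hv
  calc (X + v)ᵀ * (X + v) = Xᵀ * X + (Xᵀ * v + vᵀ * X) + vᵀ * v := by
        simp only [transpose_add, Matrix.add_mul, Matrix.mul_add]; abel
    _ = 1 + vᵀ * v := by rw [hX, hv, add_zero]

theorem polarRetract_sub_eq {n r : ℕ} (X v : Matrix (Fin n) (Fin r) ℝ) :
    polarRetract X v - (X + v) = (X + v) * cfc (fun x => (√(1 + x))⁻¹ - 1) (vᵀ * v) := by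
  have hA := posSemidef_transpose_mul_self v
  have hsa : IsSelfAdjoint (vᵀ * v) := hA.isHermitian.isSelfAdjoint
  have hsqrt : (psd_one_add_sq v).sqrt = cfc (fun x => √(1 + x)) (vᵀ * v) := by
    rw [(psd_one_add_sq v).sqrt_eq_cfc, ← hA.isHermitian.cfc_one_add,
      ← cfc_comp' Real.sqrt (1 + ·) (vᵀ * v) Real.continuous_sqrt.continuousOn
        (continuousOn_real_spectrum _ _) hsa]
  have hne : ∀ x ∈ spectrum ℝ (vᵀ * v), √(1 + x) ≠ 0 := fun x hx => by
    have := hA.nonneg_of_mem_spectrum hx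
    positivity
  rw [polarRetract, hsqrt, nonsing_inv_eq_ringInverse,
    ← cfc_inv _ _ hne (continuousOn_real_spectrum _ _) hsa,
    cfc_sub _ _ _ (continuousOn_real_spectrum _ _) (continuousOn_real_spectrum _ _),
    cfc_const_one ℝ (vᵀ * v) hsa, Matrix.mul_sub, Matrix.mul_one]

theorem transpose_mul_self_polarRetract_sub {n r : ℕ} {X v : Matrix (Fin n) (Fin r) ℝ}
    (hX : X ∈ Stiefel n r) (hv : v ∈ Tang X) :
    (polarRetract X v - (X + v))ᵀ * (polarRetract X v - (X + v)) =
      cfc (fun x => (√(1 + x) - 1) ^ 2) (vᵀ * v) := by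
  have hA := posSemidef_transpose_mul_self v
  set g : ℝ → ℝ := fun x => (√(1 + x))⁻¹ - 1
  calc _ = cfc g (vᵀ * v) * ((X + v)ᵀ * (X + v)) * cfc g (vᵀ * v) := by
        rw [polarRetract_sub_eq, transpose_mul, transpose_cfc]; simp only [Matrix.mul_assoc]; rfl
    _ = cfc (fun x => g x * (1 + x) * g x) (vᵀ * v) := by
        rw [transpose_mul_self_add_of_mem_Tang hX hv, ← hA.isHermitian.cfc_one_add,
          ← cfc_mul _ _ _ (continuousOn_real_spectrum _ _) (continuousOn_real_spectrum _ _),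
          ← cfc_mul _ _ _ (continuousOn_real_spectrum _ _) (continuousOn_real_spectrum _ _)]
    _ = cfc (fun x => (√(1 + x) - 1) ^ 2) (vᵀ * v) := by
        refine cfc_congr fun x hx => ?_
        have hx0 := hA.nonneg_of_mem_spectrum hx
        have hpos : 0 < √(1 + x) := Real.sqrt_pos.mpr (by linarith)
        have hs : √(1 + x) ^ 2 = 1 + x := Real.sq_sqrt (by linarith)
        simp only [g]
        generalize √(1 + x) = s at hpos hs ⊢
        rw [← hs]
        field_simp
        ring

theorem polarRetract_second_order_bound_general {n r : ℕ}
    (X v : Matrix (Fin n) (Fin r) ℝ)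
    (hX : X ∈ Stiefel n r) (hv : v ∈ Tang X) :
    frob (polarRetract X v - (X + v)) ≤ (frob v) ^ 2 := by
  have hA := posSemidef_transpose_mul_self v
  set lam := hA.isHermitian.eigenvalues
  have hlam : ∀ i, 0 ≤ lam i := hA.eigenvalues_nonneg
  have hfrob_v : frob v ^ 2 = ∑ i, lam i := by
    rw [frob_sq_eq_trace, hA.isHermitian.trace_eq_sum_eigenvalues]; rfl
  have key : frob (polarRetract X v - (X + v)) ^ 2 ≤ (frob v ^ 2) ^ 2 := by
    calc frob (polarRetract X v - (X + v)) ^ 2 = ∑ i, (√(1 + lam i) - 1) ^ 2 := by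
          rw [frob_sq_eq_trace, transpose_mul_self_polarRetract_sub hX hv, hA.isHermitian.trace_cfc]; rfl
      _ ≤ ∑ i, lam i ^ 2 := Finset.sum_le_sum fun i _ => sqrt_one_add_sub_one_sq_le (hlam i)
      _ ≤ (∑ i, lam i) ^ 2 := Finset.sum_sq_le_sq_sum_of_nonneg fun i _ => hlam i
      _ = (frob v ^ 2) ^ 2 := by rw [hfrob_v]
  exact (pow_le_pow_iff_left₀ (Real.sqrt_nonneg _) (sq_nonneg _) two_ne_zero).mp key

/-- for `X ∈ St(n,r)` and a tangent vector `v` with `‖v‖_F ≤ 1`, the polar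
retraction satisfies `‖R_X(v) − (X+v)‖_F ≤ ‖v‖_F²`. -/
theorem polarRetract_second_order_bound {n r : ℕ}
    (X v : Matrix (Fin n) (Fin r) ℝ)
    (hX : X ∈ Stiefel n r) (hv : v ∈ Tang X) (hv1 : frob v ≤ 1) :
    frob (polarRetract X v - (X + v)) ≤ (frob v) ^ 2 :=
  polarRetract_second_order_bound_general X v hX hv

end
end

section
/- Let φ : ℝ^{n×r} → ℝ be differentiable with L-Lipschitz continuous gradient (‖∇φ(X) − ∇φ(Y)‖_F ≤ L‖X−Y‖_F for all X,Y ∈ ℝ^{n×r}), and set L_n := max_{X ∈ St(n,r)} ‖∇φ(X)‖₂ (spectral norm) and L_g := L + L_n. Then for all X, Y ∈ St(n,r), |φ(Y) − φ(X) − ⟨grad φ(X), Y − X⟩| ≤ (L_g/2)‖Y − X‖_F². -/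
/-!
Write `E = Y - X`. Because `∇φ` is `L`-Lipschitz, the first-order Taylor remainder of `φ` along
`E` is at most `(L/2)‖E‖²`. Because `XᵀX = YᵀY = I`, the tangency defect `XᵀE + EᵀX` equals
`-EᵀE`, so replacing `∇φ(X)` by its tangent projection changes `⟨·, E⟩` by
`½ tr(Xᵀ∇φ(X) EᵀE) = ½ ∑ₑ ⟨Xe, ∇φ(X)e⟩`, the sum over the rows `e` of `E`. As `X` is an
isometry, each term is at most `‖∇φ(X)‖₂ ‖e‖²`, which accounts for the extra `(L_n/2)‖E‖²`.
-/

open Matrix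
open scoped BigOperators

attribute [local instance] Matrix.frobeniusNormedAddCommGroup Matrix.frobeniusNormedSpace

noncomputable section

/-- the trace inner product ⟨A,B⟩ = tr(AᵀB) -/
def innerF {n r : ℕ} (A B : Matrix (Fin n) (Fin r) ℝ) : ℝ := (Aᵀ * B).trace

/-- orthogonal projection onto the tangent space at X -/
def projT {n r : ℕ} (X Y : Matrix (Fin n) (Fin r) ℝ) : Matrix (Fin n) (Fin r) ℝ :=
  Y - (1 / 2 : ℝ) • (X * (Xᵀ * Y + Yᵀ * X))

/-- the spectral norm (operator 2-norm) of a matrix -/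
def spec {n r : ℕ} (A : Matrix (Fin n) (Fin r) ℝ) : ℝ :=
  ‖LinearMap.toContinuousLinearMap (Matrix.toEuclideanLin A)‖

/-- the Euclidean gradient of φ : ℝ^{n×r} → ℝ (w.r.t. the trace inner product) -/
def egrad {n r : ℕ} (φ : Matrix (Fin n) (Fin r) ℝ → ℝ) (X : Matrix (Fin n) (Fin r) ℝ) :
    Matrix (Fin n) (Fin r) ℝ :=
  fun i j => fderiv ℝ φ X (Matrix.single i j 1)

/-- the Riemannian gradient on the Stiefel manifold: grad φ(X) = P_{T_X}(∇φ(X)) -/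
def rgrad {n r : ℕ} (φ : Matrix (Fin n) (Fin r) ℝ → ℝ) (X : Matrix (Fin n) (Fin r) ℝ) :
    Matrix (Fin n) (Fin r) ℝ :=
  projT X (egrad φ X)

section Taylor

variable {E F : Type*} [NormedAddCommGroup E] [NormedSpace ℝ E] [NormedAddCommGroup F]
  [NormedSpace ℝ F]

theorem norm_sub_sub_fderiv_le_of_lipschitz {f : E → F} (hf : Differentiable ℝ f) {x : E}
    {L : ℝ} (hL : ∀ y v, ‖fderiv ℝ f y v - fderiv ℝ f x v‖ ≤ L * ‖y - x‖ * ‖v‖) (h : E) :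
    ‖f (x + h) - f x - fderiv ℝ f x h‖ ≤ L / 2 * ‖h‖ ^ 2 := by
  set g : ℝ → F := fun t => f (x + t • h) - f x - t • fderiv ℝ f x h
  set g' : ℝ → F := fun t => fderiv ℝ f (x + t • h) h - fderiv ℝ f x h
  have hg : ∀ t, HasDerivAt g (g' t) t := fun t => by
    have hline : HasDerivAt (fun s : ℝ => x + s • h) h t := by
      simpa using ((hasDerivAt_id t).smul_const h).const_add x
    have := (((hf _).hasFDerivAt.comp_hasDerivAt t hline).sub_const (f x)).sub
      ((hasDerivAt_id t).smul_const (fderiv ℝ f x h))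
    rwa [one_smul] at this
  have hbound : ∀ t ∈ Set.Ico (0 : ℝ) 1, ‖g' t‖ ≤ L * ‖h‖ ^ 2 * t := fun t ht =>
    calc ‖g' t‖ ≤ L * ‖t • h‖ * ‖h‖ := by simpa [g'] using hL (x + t • h) h
      _ = L * ‖h‖ ^ 2 * t := by rw [norm_smul, Real.norm_of_nonneg ht.1]; ring
  have hB : ∀ t, HasDerivAt (fun t => L / 2 * ‖h‖ ^ 2 * t ^ 2) (L * ‖h‖ ^ 2 * t) t := fun t =>
    ((hasDerivAt_pow 2 t).const_mul _).congr_deriv (by ring)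
  have := image_norm_le_of_norm_deriv_right_le_deriv_boundary (f := g) (a := 0) (b := 1)
    (fun t _ => (hg t).continuousAt.continuousWithinAt) (fun t _ => (hg t).hasDerivWithinAt)
    (by simp [g]) hB hbound (Set.right_mem_Icc.2 zero_le_one)
  simpa [g] using this

end Taylor

theorem Matrix.trace_transpose_mul_of_isSymm {m R : Type*} [Fintype m] [CommSemiring R]
    {M : Matrix m m R} (hM : M.IsSymm) (A : Matrix m m R) : trace (Aᵀ * M) = trace (A * M) := by
  rw [← trace_transpose, transpose_mul, transpose_transpose, hM.eq, trace_mul_comm]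

theorem Matrix.trace_mul_transpose_mul_self {m k R : Type*} [Fintype m] [Fintype k]
    [CommSemiring R] (A : Matrix k k R) (E : Matrix m k R) :
    trace (A * (Eᵀ * E)) = ∑ i, E i ⬝ᵥ (A *ᵥ E i) := by
  rw [← Matrix.mul_assoc, trace_mul_comm]
  rfl

section Frobenius

variable {n r : ℕ}

theorem frob_nonneg (A : Matrix (Fin n) (Fin r) ℝ) : 0 ≤ frob A := Real.sqrt_nonneg _

theorem frob_eq_norm (A : Matrix (Fin n) (Fin r) ℝ) : frob A = ‖A‖ := by
  simp [frob, frobenius_norm_def, Real.sqrt_eq_rpow]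

theorem innerF_eq_sum (A B : Matrix (Fin n) (Fin r) ℝ) :
    innerF A B = ∑ i, ∑ j, A i j * B i j := by
  simp only [innerF, Matrix.trace, Matrix.diag, Matrix.mul_apply, Matrix.transpose_apply]
  exact Finset.sum_comm

theorem innerF_le (A B : Matrix (Fin n) (Fin r) ℝ) : innerF A B ≤ frob A * frob B := by
  have := Real.sum_mul_le_sqrt_mul_sqrt Finset.univ (fun p : Fin n × Fin r => A p.1 p.2)
    (fun p => B p.1 p.2)
  simpa only [innerF_eq_sum, frob, Fintype.sum_prod_type] using this

theorem abs_innerF_le (A B : Matrix (Fin n) (Fin r) ℝ) : |innerF A B| ≤ frob A * frob B := by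
  refine abs_le.2 ⟨?_, innerF_le A B⟩
  have := innerF_le (-A) B
  simp only [frob_eq_norm, norm_neg, innerF, Matrix.transpose_neg, Matrix.neg_mul,
    Matrix.trace_neg] at this ⊢
  linarith

theorem fderiv_apply_eq_innerF_egrad (φ : Matrix (Fin n) (Fin r) ℝ → ℝ)
    (X V : Matrix (Fin n) (Fin r) ℝ) : fderiv ℝ φ X V = innerF (egrad φ X) V := by
  have hV : V = ∑ i, ∑ j, V i j • Matrix.single i j (1 : ℝ) := by
    conv_lhs => rw [Matrix.matrix_eq_sum_single V]
    simp [Matrix.smul_single]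
  conv_lhs => rw [hV]
  simp only [map_sum, map_smul, smul_eq_mul, innerF_eq_sum, egrad, mul_comm]

theorem abs_fderiv_sub_apply_le (φ : Matrix (Fin n) (Fin r) ℝ → ℝ)
    (X Y V : Matrix (Fin n) (Fin r) ℝ) :
    |fderiv ℝ φ Y V - fderiv ℝ φ X V| ≤ frob (egrad φ Y - egrad φ X) * frob V := by
  rw [fderiv_apply_eq_innerF_egrad, fderiv_apply_eq_innerF_egrad]
  convert abs_innerF_le (egrad φ Y - egrad φ X) V using 2
  simp [innerF, Matrix.transpose_sub, Matrix.sub_mul]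

theorem abs_sub_sub_innerF_egrad_le {φ : Matrix (Fin n) (Fin r) ℝ → ℝ} {L : ℝ}
    (hdiff : Differentiable ℝ φ)
    (hLip : ∀ X Y : Matrix (Fin n) (Fin r) ℝ, frob (egrad φ X - egrad φ Y) ≤ L * frob (X - Y))
    (X E : Matrix (Fin n) (Fin r) ℝ) :
    |φ (X + E) - φ X - innerF (egrad φ X) E| ≤ L / 2 * frob E ^ 2 := by
  have hL : ∀ Y V, ‖fderiv ℝ φ Y V - fderiv ℝ φ X V‖ ≤ L * ‖Y - X‖ * ‖V‖ := fun Y V => by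
    rw [Real.norm_eq_abs, ← frob_eq_norm, ← frob_eq_norm]
    exact (abs_fderiv_sub_apply_le φ X Y V).trans
      (mul_le_mul_of_nonneg_right (hLip Y X) (frob_nonneg V))
  have := norm_sub_sub_fderiv_le_of_lipschitz hdiff hL E
  rw [Real.norm_eq_abs, ← frob_eq_norm] at this
  -- the two sides reach `Module ℝ ℝ` through different instance paths, so `rw` does not apply
  convert this using 3
  exact (fderiv_apply_eq_innerF_egrad φ X E).symm

end Frobenius

section Stiefel

variable {n r : ℕ}

theorem transpose_mul_sub_add_of_mem_stiefel {X Y : Matrix (Fin n) (Fin r) ℝ}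
    (hX : X ∈ Stiefel n r) (hY : Y ∈ Stiefel n r) :
    Xᵀ * (Y - X) + (Y - X)ᵀ * X = -((Y - X)ᵀ * (Y - X)) := by
  have hX' : Xᵀ * X = 1 := hX
  have hY' : Yᵀ * Y = 1 := hY
  simp only [transpose_sub, Matrix.sub_mul, Matrix.mul_sub, hX', hY']
  abel

theorem innerF_projT_sub {X Y : Matrix (Fin n) (Fin r) ℝ} (hX : X ∈ Stiefel n r)
    (hY : Y ∈ Stiefel n r) (G : Matrix (Fin n) (Fin r) ℝ) :
    innerF (projT X G) (Y - X) =
      innerF G (Y - X) + 1 / 2 * trace (Xᵀ * G * ((Y - X)ᵀ * (Y - X))) := by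
  set E := Y - X
  set S := Xᵀ * G + Gᵀ * X
  have hS : Sᵀ = S := by simp [S, transpose_add, transpose_mul, add_comm]
  have hEE : (Eᵀ * E).IsSymm := by simp [IsSymm, transpose_mul]
  have hQ : trace (Xᵀ * E * S) = -trace (Xᵀ * G * (Eᵀ * E)) := by
    have hsum : trace ((Xᵀ * E + (Xᵀ * E)ᵀ) * S) = -trace (S * (Eᵀ * E)) := by
      rw [transpose_mul, transpose_transpose, transpose_mul_sub_add_of_mem_stiefel hX hY,
        Matrix.neg_mul, trace_neg, trace_mul_comm]
    have hsymm : trace ((Xᵀ * E)ᵀ * S) = trace (Xᵀ * E * S) := by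
      rw [← trace_transpose, transpose_mul, transpose_transpose, hS, trace_mul_comm]
    have hSEE : trace (S * (Eᵀ * E)) = 2 * trace (Xᵀ * G * (Eᵀ * E)) := by
      have := trace_transpose_mul_of_isSymm hEE (Xᵀ * G)
      rw [transpose_mul, transpose_transpose] at this
      rw [Matrix.add_mul, trace_add, this]
      ring
    rw [Matrix.add_mul, trace_add, hsymm, hSEE] at hsum
    linarith
  have hXS : innerF (X * S) E = trace (Xᵀ * E * S) := by
    rw [innerF, transpose_mul, hS, Matrix.mul_assoc, trace_mul_comm]
  rw [projT, innerF, transpose_sub, Matrix.sub_mul, trace_sub, transpose_smul, Matrix.smul_mul,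
    trace_smul, ← innerF, ← innerF, hXS, hQ, smul_eq_mul]
  ring

open WithLp in
theorem norm_toLp_mulVec_of_mem_stiefel {X : Matrix (Fin n) (Fin r) ℝ} (hX : X ∈ Stiefel n r)
    (u : Fin r → ℝ) : ‖toLp 2 (X *ᵥ u)‖ = ‖toLp 2 u‖ := by
  have h : (X *ᵥ u) ⬝ᵥ (X *ᵥ u) = u ⬝ᵥ u := by
    rw [dotProduct_mulVec, vecMul_mulVec, hX, vecMul_one]
  rw [← sq_eq_sq₀ (norm_nonneg _) (norm_nonneg _), ← real_inner_self_eq_norm_sq,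
    ← real_inner_self_eq_norm_sq, EuclideanSpace.inner_toLp_toLp, EuclideanSpace.inner_toLp_toLp]
  simpa using h

open WithLp in
theorem norm_toLp_mulVec_le_spec (G : Matrix (Fin n) (Fin r) ℝ) (u : Fin r → ℝ) :
    ‖toLp 2 (G *ᵥ u)‖ ≤ spec G * ‖toLp 2 u‖ :=
  (LinearMap.toContinuousLinearMap (toEuclideanLin G)).le_opNorm (toLp 2 u)

open WithLp in
theorem abs_dotProduct_transpose_mul_mulVec_le {X : Matrix (Fin n) (Fin r) ℝ}
    (hX : X ∈ Stiefel n r) (G : Matrix (Fin n) (Fin r) ℝ) (u : Fin r → ℝ) :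
    |u ⬝ᵥ ((Xᵀ * G) *ᵥ u)| ≤ spec G * ‖toLp 2 u‖ ^ 2 := by
  have h : u ⬝ᵥ ((Xᵀ * G) *ᵥ u) = inner ℝ (toLp 2 (X *ᵥ u)) (toLp 2 (G *ᵥ u)) := by
    rw [EuclideanSpace.inner_toLp_toLp, ← mulVec_mulVec, dotProduct_mulVec, vecMul_transpose]
    simp [dotProduct_comm]
  calc |u ⬝ᵥ ((Xᵀ * G) *ᵥ u)| ≤ ‖toLp 2 (X *ᵥ u)‖ * ‖toLp 2 (G *ᵥ u)‖ :=
        h ▸ abs_real_inner_le_norm _ _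
    _ ≤ ‖toLp 2 u‖ * (spec G * ‖toLp 2 u‖) := by
        rw [norm_toLp_mulVec_of_mem_stiefel hX]
        gcongr
        exact norm_toLp_mulVec_le_spec G u
    _ = spec G * ‖toLp 2 u‖ ^ 2 := by ring

open WithLp in
theorem frob_sq_eq_sum_norm_row_sq (E : Matrix (Fin n) (Fin r) ℝ) :
    frob E ^ 2 = ∑ i, ‖toLp 2 (E i)‖ ^ 2 := by
  simp only [frob, EuclideanSpace.norm_sq_eq, Real.norm_eq_abs, sq_abs]
  exact Real.sq_sqrt (by positivity)

theorem abs_trace_transpose_mul_mul_le {X : Matrix (Fin n) (Fin r) ℝ} (hX : X ∈ Stiefel n r)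
    (G E : Matrix (Fin n) (Fin r) ℝ) :
    |trace (Xᵀ * G * (Eᵀ * E))| ≤ spec G * frob E ^ 2 := by
  rw [trace_mul_transpose_mul_self, frob_sq_eq_sum_norm_row_sq, Finset.mul_sum]
  exact (Finset.abs_sum_le_sum_abs _ _).trans
    (Finset.sum_le_sum fun i _ => abs_dotProduct_transpose_mul_mulVec_le hX G (E i))

end Stiefel

/-- Lipschitz-type inequality on the Stiefel manifold. If `φ` is differentiable
with `L`-Lipschitz Euclidean gradient, `L_n = max_{X ∈ St(n,r)} ‖∇φ(X)‖₂` and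
`L_g = L + L_n`, then for all `X, Y ∈ St(n,r)`,
`|φ(Y) − φ(X) − ⟨grad φ(X), Y − X⟩| ≤ (L_g/2)‖Y − X‖_F²`. -/
theorem riemannian_lipschitz_type_inequality {n r : ℕ}
    (φ : Matrix (Fin n) (Fin r) ℝ → ℝ) (L Ln Lg : ℝ)
    (hdiff : Differentiable ℝ φ)
    (hLip : ∀ X Y : Matrix (Fin n) (Fin r) ℝ, frob (egrad φ X - egrad φ Y) ≤ L * frob (X - Y))
    (hLn : IsGreatest ((fun X => spec (egrad φ X)) '' Stiefel n r) Ln)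
    (hLg : Lg = L + Ln)
    (X Y : Matrix (Fin n) (Fin r) ℝ) (hX : X ∈ Stiefel n r) (hY : Y ∈ Stiefel n r) :
    |φ Y - (φ X + innerF (rgrad φ X) (Y - X))| ≤ Lg / 2 * frob (Y - X) ^ 2 := by
  set E := Y - X
  set G := egrad φ X
  set T := trace (Xᵀ * G * (Eᵀ * E))
  have htaylor : |φ Y - φ X - innerF G E| ≤ L / 2 * frob E ^ 2 := by
    simpa [E] using abs_sub_sub_innerF_egrad_le hdiff hLip X E
  have htrace : |T| ≤ spec G * frob E ^ 2 := abs_trace_transpose_mul_mul_le hX G E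
  have hspec : spec G ≤ Ln := hLn.2 ⟨X, hX, rfl⟩
  rw [rgrad, innerF_projT_sub hX hY G, hLg]
  calc |φ Y - (φ X + (innerF G E + 1 / 2 * T))| = |(φ Y - φ X - innerF G E) - 1 / 2 * T| := by
        ring_nf
    _ ≤ |φ Y - φ X - innerF G E| + 1 / 2 * |T| := by
        simpa [abs_mul] using abs_sub (φ Y - φ X - innerF G E) (1 / 2 * T)
    _ ≤ L / 2 * frob E ^ 2 + 1 / 2 * (Ln * frob E ^ 2) := by
        gcongr
        exact htrace.trans (mul_le_mul_of_nonneg_right hspec (sq_nonneg _))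
    _ = (L + Ln) / 2 * frob E ^ 2 := by ring

end
end

section
/- Let X_1, …, X_N ∈ St(n,r) and let X̄ := (1/N)Σ_{i=1}^N X_i have full column rank r. Then the polar factor X̂ := X̄(X̄ᵀX̄)^{-1/2} belongs to St(n,r) and minimizes Σ_{i=1}^N ‖Y − X_i‖_F² over Y ∈ St(n,r); that is, for every Y ∈ St(n,r), Σ_{i=1}^N ‖X̂ − X_i‖_F² ≤ Σ_{i=1}^N ‖Y − X_i‖_F². In other words, the induced arithmetic mean equals the orthogonal projection of the Euclidean average onto the Stiefel manifold. -/
open Matrix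
open scoped BigOperators

noncomputable section

lemma psd_AtA {n r : ℕ} (A : Matrix (Fin n) (Fin r) ℝ) : (Aᵀ * A).PosSemidef := by
  simpa using Matrix.posSemidef_conjTranspose_mul_self A

/-- the old Mathlib `Matrix.PosSemidef.sqrt` (removed upstream), spelled out -/
def psdSqrt {r : ℕ} {M : Matrix (Fin r) (Fin r) ℝ} (hA : M.PosSemidef) : Matrix (Fin r) (Fin r) ℝ :=
  (hA.1.eigenvectorUnitary : Matrix (Fin r) (Fin r) ℝ) *
    diagonal ((↑) ∘ (Real.sqrt ·) ∘ hA.1.eigenvalues) *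
    (star hA.1.eigenvectorUnitary : Matrix (Fin r) (Fin r) ℝ)

/-- the polar factor A(AᵀA)^{-1/2} -/
def polarFactor {n r : ℕ} (A : Matrix (Fin n) (Fin r) ℝ) : Matrix (Fin n) (Fin r) ℝ :=
  A * (psdSqrt (psd_AtA A))⁻¹

/-! On `St(n,r)` one has `‖Y - Xᵢ‖_F² = 2r - 2 tr(Yᵀ Xᵢ)`, so `Σᵢ ‖Y - Xᵢ‖_F² = 2N (r - tr(Yᵀ X̄))`
and the task is to maximize `tr(Yᵀ X̄)` over `Y ∈ St(n,r)`. Write `X̄ = X̂ R` with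
`R = (X̄ᵀX̄)^{1/2}` and let `S = R^{1/2}`. Then `YS` and `X̂S` have the same Gram matrix `R`, so
`tr(Yᵀ X̄) = tr((YS)ᵀ(X̂S)) ≤ ½ (tr((YS)ᵀ(YS)) + tr((X̂S)ᵀ(X̂S))) = tr R = tr(X̂ᵀ X̄)`. -/

section psdSqrt

variable {r : ℕ} {M : Matrix (Fin r) (Fin r) ℝ}

lemma psdSqrt_mul_self (hM : M.PosSemidef) : psdSqrt hM * psdSqrt hM = M := by
  set U : Matrix (Fin r) (Fin r) ℝ := (hM.1.eigenvectorUnitary : Matrix (Fin r) (Fin r) ℝ)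
  set D : Matrix (Fin r) (Fin r) ℝ := diagonal ((↑) ∘ (Real.sqrt ·) ∘ hM.1.eigenvalues)
  have hUU : star U * U = 1 := Unitary.coe_star_mul_self _
  have hDD : D * D = diagonal ((↑) ∘ hM.1.eigenvalues) := by
    rw [diagonal_mul_diagonal]
    congr 1 with i
    simp [Real.mul_self_sqrt (hM.eigenvalues_nonneg i)]
  calc psdSqrt hM * psdSqrt hM = U * (D * (star U * U) * D) * star U := by
        simp only [psdSqrt, Matrix.mul_assoc]; rfl
    _ = M := by
        rw [hUU, Matrix.mul_one, hDD]
        conv_rhs => rw [hM.1.spectral_theorem, Unitary.conjStarAlgAut_apply]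
        rfl

lemma posSemidef_psdSqrt (hM : M.PosSemidef) : (psdSqrt hM).PosSemidef := by
  have hD : (0 : Fin r → ℝ) ≤ (↑) ∘ (Real.sqrt ·) ∘ hM.1.eigenvalues :=
    fun i => Real.sqrt_nonneg _
  simpa only [psdSqrt, star_eq_conjTranspose] using
    (PosSemidef.diagonal hD).mul_mul_conjTranspose_same
      (hM.1.eigenvectorUnitary : Matrix (Fin r) (Fin r) ℝ)

lemma transpose_psdSqrt (hM : M.PosSemidef) : (psdSqrt hM)ᵀ = psdSqrt hM := by
  simpa [Matrix.IsHermitian] using (posSemidef_psdSqrt hM).1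

lemma isUnit_psdSqrt (hM : M.PosSemidef) (hM' : IsUnit M) : IsUnit (psdSqrt hM) := by
  rw [isUnit_iff_isUnit_det] at hM' ⊢
  rw [← psdSqrt_mul_self hM, det_mul] at hM'
  exact isUnit_of_mul_isUnit_left hM'

end psdSqrt

lemma mulVec_injective_of_rank_eq_card {K m n : Type*} [Field K] [Fintype m] [Fintype n]
    (A : Matrix m n K) (h : A.rank = Fintype.card n) : Function.Injective A.mulVec := by
  have hker := A.mulVecLin.finrank_range_add_finrank_ker
  rw [← Matrix.rank, h, Module.finrank_fintype_fun_eq_card] at hker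
  have : LinearMap.ker A.mulVecLin = ⊥ := Submodule.finrank_eq_zero.mp (by omega)
  exact LinearMap.ker_eq_bot.mp this

lemma posDef_transpose_mul_self_of_rank_eq {n r : ℕ} (A : Matrix (Fin n) (Fin r) ℝ)
    (h : A.rank = r) : (Aᵀ * A).PosDef := by
  simpa using PosDef.conjTranspose_mul_self A
    (mulVec_injective_of_rank_eq_card A (by simpa using h))

lemma trace_transpose_sub_mul_sub {m k : Type*} [Fintype m] [Fintype k] (B C : Matrix m k ℝ) :
    trace ((B - C)ᵀ * (B - C)) = trace (Bᵀ * B) - 2 * trace (Bᵀ * C) + trace (Cᵀ * C) := by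
  have hCB : trace (Cᵀ * B) = trace (Bᵀ * C) := by
    rw [← trace_transpose, transpose_mul, transpose_transpose]
  simp only [transpose_sub, Matrix.sub_mul, Matrix.mul_sub, trace_sub, hCB]
  ring

lemma two_mul_trace_transpose_mul_le {m k : Type*} [Fintype m] [Fintype k]
    (B C : Matrix m k ℝ) : 2 * trace (Bᵀ * C) ≤ trace (Bᵀ * B) + trace (Cᵀ * C) := by
  have h := (posSemidef_conjTranspose_mul_self (B - C)).trace_nonneg
  rw [conjTranspose_eq_transpose_of_trivial, trace_transpose_sub_mul_sub] at h
  linarith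

section Stiefel

variable {n r : ℕ}

lemma mem_stiefel {X : Matrix (Fin n) (Fin r) ℝ} : X ∈ Stiefel n r ↔ Xᵀ * X = 1 := Iff.rfl

lemma trace_mul_mul_le_trace_of_mem_stiefel {X Y : Matrix (Fin n) (Fin r) ℝ}
    (hY : Y ∈ Stiefel n r) (hX : X ∈ Stiefel n r) {R : Matrix (Fin r) (Fin r) ℝ}
    (hR : R.PosSemidef) : trace (Yᵀ * (X * R)) ≤ trace R := by
  set S := psdSqrt hR
  have hS : Sᵀ = S := transpose_psdSqrt hR
  have hSS : S * S = R := psdSqrt_mul_self hR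
  have hgram {Z : Matrix (Fin n) (Fin r) ℝ} (hZ : Z ∈ Stiefel n r) :
      (Z * S)ᵀ * (Z * S) = R := by
    rw [transpose_mul, hS, Matrix.mul_assoc, ← Matrix.mul_assoc Zᵀ, mem_stiefel.mp hZ,
      Matrix.one_mul, hSS]
  have htrace : trace (Yᵀ * (X * R)) = trace ((Y * S)ᵀ * (X * S)) := by
    rw [transpose_mul, hS, Matrix.mul_assoc, trace_mul_comm S, ← hSS]
    simp only [Matrix.mul_assoc]
  have := two_mul_trace_transpose_mul_le (Y * S) (X * S)
  rw [hgram hY, hgram hX] at this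
  linarith

lemma frob_sq (A : Matrix (Fin n) (Fin r) ℝ) : frob A ^ 2 = trace (Aᵀ * A) := by
  rw [frob, Real.sq_sqrt (by positivity)]
  simp only [trace, diag, mul_apply, transpose_apply, sq]
  exact Finset.sum_comm

lemma frob_sub_sq_of_mem_stiefel {Z W : Matrix (Fin n) (Fin r) ℝ} (hZ : Z ∈ Stiefel n r)
    (hW : W ∈ Stiefel n r) : frob (Z - W) ^ 2 = 2 * r - 2 * trace (Zᵀ * W) := by
  rw [frob_sq, trace_transpose_sub_mul_sub, mem_stiefel.mp hZ, mem_stiefel.mp hW, trace_one,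
    Fintype.card_fin]
  ring

lemma sum_frob_sub_sq_of_mem_stiefel {ι : Type*} [Fintype ι]
    {Xs : ι → Matrix (Fin n) (Fin r) ℝ} (hXs : ∀ i, Xs i ∈ Stiefel n r)
    {Z : Matrix (Fin n) (Fin r) ℝ} (hZ : Z ∈ Stiefel n r) :
    ∑ i, frob (Z - Xs i) ^ 2 = 2 * (Fintype.card ι * r - trace (Zᵀ * ∑ i, Xs i)) := by
  simp only [frob_sub_sq_of_mem_stiefel hZ (hXs _), Finset.sum_sub_distrib, Finset.sum_const,
    Finset.card_univ, nsmul_eq_mul, ← Finset.mul_sum, Matrix.mul_sum, trace_sum]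
  ring

variable {A : Matrix (Fin n) (Fin r) ℝ}

lemma isUnit_psdSqrt_of_rank_eq (h : A.rank = r) : IsUnit (psdSqrt (psd_AtA A)) :=
  isUnit_psdSqrt _ (posDef_transpose_mul_self_of_rank_eq A h).isUnit

lemma polarFactor_mul_psdSqrt (h : A.rank = r) : polarFactor A * psdSqrt (psd_AtA A) = A := by
  rw [polarFactor, Matrix.mul_assoc,
    nonsing_inv_mul _ ((isUnit_iff_isUnit_det _).mp (isUnit_psdSqrt_of_rank_eq h)),
    Matrix.mul_one]

lemma polarFactor_mem_stiefel (h : A.rank = r) : polarFactor A ∈ Stiefel n r := by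
  set S := psdSqrt (psd_AtA A)
  have hdet : IsUnit S.det := (isUnit_iff_isUnit_det _).mp (isUnit_psdSqrt_of_rank_eq h)
  have hS : Sᵀ = S := transpose_psdSqrt _
  have hSS : S * S = Aᵀ * A := psdSqrt_mul_self _
  calc (A * S⁻¹)ᵀ * (A * S⁻¹) = S⁻¹ * (Aᵀ * A) * S⁻¹ := by
        rw [transpose_mul, transpose_nonsing_inv, hS]
        simp only [Matrix.mul_assoc]
    _ = (S⁻¹ * S) * (S * S⁻¹) := by
        rw [← hSS]
        simp only [Matrix.mul_assoc]
    _ = 1 := by rw [nonsing_inv_mul _ hdet, mul_nonsing_inv _ hdet, Matrix.one_mul]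

lemma trace_transpose_mul_le_polarFactor (h : A.rank = r) {Y : Matrix (Fin n) (Fin r) ℝ}
    (hY : Y ∈ Stiefel n r) : trace (Yᵀ * A) ≤ trace ((polarFactor A)ᵀ * A) := by
  have hmem := polarFactor_mem_stiefel h
  set S := psdSqrt (psd_AtA A)
  calc trace (Yᵀ * A) = trace (Yᵀ * (polarFactor A * S)) := by rw [polarFactor_mul_psdSqrt h]
    _ ≤ trace S := trace_mul_mul_le_trace_of_mem_stiefel hY hmem (posSemidef_psdSqrt _)
    _ = trace ((polarFactor A)ᵀ * (polarFactor A * S)) := by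
        rw [← Matrix.mul_assoc, mem_stiefel.mp hmem, Matrix.one_mul]
    _ = trace ((polarFactor A)ᵀ * A) := by rw [polarFactor_mul_psdSqrt h]

end Stiefel

/-- the induced arithmetic mean is the orthogonal projection of the Euclidean
average onto the Stiefel manifold: if `X̄ = (1/N)Σ X_i` has full column rank, then its polar
factor `X̂ = X̄(X̄ᵀX̄)^{-1/2}` lies in `St(n,r)` and minimizes `Σ_i ‖Y − X_i‖_F²` over
`Y ∈ St(n,r)`. -/
theorem polarFactor_isIAM {n r N : ℕ}
    (Xs : Fin N → Matrix (Fin n) (Fin r) ℝ)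
    (hXs : ∀ i, Xs i ∈ Stiefel n r)
    (Xbar : Matrix (Fin n) (Fin r) ℝ)
    (hXbar : Xbar = (N : ℝ)⁻¹ • ∑ i, Xs i)
    (hrank : Xbar.rank = r) :
    polarFactor Xbar ∈ Stiefel n r ∧
      ∀ Y ∈ Stiefel n r,
        ∑ i, frob (polarFactor Xbar - Xs i) ^ 2 ≤ ∑ i, frob (Y - Xs i) ^ 2 := by
  have hmem := polarFactor_mem_stiefel hrank
  refine ⟨hmem, fun Y hY => ?_⟩
  have hsum : ∑ i, Xs i = (N : ℝ) • Xbar := by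
    rcases eq_or_ne N 0 with rfl | hN
    · simp
    · rw [hXbar, smul_inv_smul₀ (Nat.cast_ne_zero.mpr hN)]
  rw [sum_frob_sub_sq_of_mem_stiefel hXs hmem, sum_frob_sub_sq_of_mem_stiefel hXs hY, hsum,
    Matrix.mul_smul, Matrix.mul_smul, trace_smul, trace_smul, smul_eq_mul, smul_eq_mul]
  gcongr
  exact trace_transpose_mul_le_polarFactor hrank hY

end
end
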